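/- arXiv:math-ph/0612041 — 5 statements merged into one kernel-verified Lean document; each statement's English description precedes it below -/
import Mathlib

section
/- For every n ∈ ℕ and all constants c > 0 and r₁ > 0, the quantity sup_{x ∈ ℝ²} ∫_{{y : |x−y| ≥ r₁}} ((1 + |x|^n)/(1 + |y|^n)) · |x−y|^{−1/2} · e^{−√c·|x−y|} dy is finite. -/
open MeasureTheory

lemma aux_one_add_pow_le (k : ℕ) (t : ℝ) (ht : 0 ≤ t) :
    (1 + t) ^ k ≤ 2 ^ k * (1 + t ^ k) := by
  calc (1 + t) ^ k ≤ (2 * max 1 t) ^ k := by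
        apply pow_le_pow_left₀ (by positivity)
        have h1 := le_max_left (1:ℝ) t
        have h2 := le_max_right (1:ℝ) t
        linarith
    _ = 2 ^ k * (max 1 t) ^ k := by rw [mul_pow]
    _ ≤ 2 ^ k * (1 + t ^ k) := by
        apply mul_le_mul_of_nonneg_left _ (by positivity)
        rcases max_cases (1:ℝ) t with ⟨h, _⟩ | ⟨h, _⟩ <;> rw [h]
        · simp only [one_pow]
          nlinarith [pow_nonneg ht k]
        · nlinarith [pow_nonneg ht k]

/-- Exterior estimate for the exponentially decaying Green's function kernel of `-Δ + c`
in `ℝ²`: for every `n ∈ ℕ`, `c > 0` and `r₁ > 0`,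
`sup_x ∫_{|x-y| ≥ r₁} ((1+|x|^n)/(1+|y|^n)) |x-y|^{-1/2} e^{-√c |x-y|} dy` is finite. -/
theorem exterior_kernel_estimate (n : ℕ) (c r₁ : ℝ) (hc : 0 < c) (hr : 0 < r₁) :
    (⨆ x : EuclideanSpace ℝ (Fin 2),
      ∫⁻ y in {y : EuclideanSpace ℝ (Fin 2) | r₁ ≤ dist x y},
        ENNReal.ofReal (((1 + ‖x‖ ^ n) / (1 + ‖y‖ ^ n)) *
          (dist x y) ^ (-(1 / 2 : ℝ)) * Real.exp (-(Real.sqrt c) * dist x y))) < ⊤ := by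
  set a := Real.sqrt c with ha_def
  have ha : 0 < a := Real.sqrt_pos.mpr hc
  set m := n + 3 with hm_def
  set K : ℝ := 2 ^ m * (1 + (m.factorial : ℝ) / a ^ m) with hK_def
  have hK0 : 0 < K := by positivity
  -- key pointwise bound: (1+t)^m ≤ K * exp (a*t)
  have key : ∀ t : ℝ, 0 ≤ t → (1 + t) ^ m ≤ K * Real.exp (a * t) := by
    intro t ht
    have hx : (0:ℝ) ≤ a * t := by positivity
    have hterm : (a * t) ^ m / (m.factorial : ℝ) ≤
        ∑ i ∈ Finset.range (m + 1), (a * t) ^ i / (i.factorial : ℝ) :=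
      Finset.single_le_sum (f := fun i => (a*t)^i / (i.factorial : ℝ))
        (fun i _ => by positivity) (Finset.self_mem_range_succ m)
    have hsum := Real.sum_le_exp_of_nonneg hx (m + 1)
    have h3 : a ^ m * t ^ m ≤ (m.factorial : ℝ) * Real.exp (a * t) := by
      have h := hterm.trans hsum
      rw [div_le_iff₀ (by positivity)] at h
      calc a ^ m * t ^ m = (a * t) ^ m := by rw [mul_pow]
        _ ≤ Real.exp (a * t) * (m.factorial : ℝ) := h
        _ = (m.factorial : ℝ) * Real.exp (a * t) := by ring
    have h2 : t ^ m ≤ ((m.factorial : ℝ) / a ^ m) * Real.exp (a * t) := by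
      rw [div_mul_eq_mul_div, le_div_iff₀ (by positivity)]
      nlinarith [h3]
    have hexp1 : 1 ≤ Real.exp (a * t) := Real.one_le_exp hx
    calc (1 + t) ^ m ≤ 2 ^ m * (1 + t ^ m) := aux_one_add_pow_le m t ht
      _ ≤ 2 ^ m * (Real.exp (a * t) + ((m.factorial : ℝ) / a ^ m) * Real.exp (a * t)) := by
          apply mul_le_mul_of_nonneg_left _ (by positivity)
          linarith
      _ = K * Real.exp (a * t) := by rw [hK_def]; ring
  set C : ℝ := r₁ ^ (-(1/2 : ℝ)) * 2 ^ (n + 1) * K with hC_def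
  have hC0 : 0 < C := by positivity
  -- the pointwise comparison with the integrable japanese bracket
  have hbound : ∀ x y : EuclideanSpace ℝ (Fin 2), r₁ ≤ dist x y →
      ((1 + ‖x‖ ^ n) / (1 + ‖y‖ ^ n)) * (dist x y) ^ (-(1/2 : ℝ)) *
        Real.exp (-a * dist x y) ≤ C * (1 + ‖x - y‖) ^ (-(3 : ℝ)) := by
    intro x y hd
    set d := dist x y with hd_def
    have hd0 : 0 < d := lt_of_lt_of_le hr hd
    have hP0 : (0:ℝ) < 1 + d := by linarith
    have hyn : (0:ℝ) < 1 + ‖y‖ ^ n := by positivity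
    have hE0 : (0:ℝ) < Real.exp (a * d) := Real.exp_pos _
    -- ratio bound
    have hratio : (1 + ‖x‖ ^ n) / (1 + ‖y‖ ^ n) ≤ 2 ^ (n + 1) * (1 + d) ^ n := by
      rw [div_le_iff₀ hyn]
      have hxy : ‖x‖ ≤ ‖y‖ + d := by
        calc ‖x‖ = ‖y + (x - y)‖ := by rw [show y + (x - y) = x by abel]
          _ ≤ ‖y‖ + ‖x - y‖ := norm_add_le _ _
          _ = ‖y‖ + d := by rw [hd_def, dist_eq_norm]
      have h1 : ‖x‖ ^ n ≤ ((1 + ‖y‖) * (1 + d)) ^ n := by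
        apply pow_le_pow_left₀ (norm_nonneg x)
        nlinarith [norm_nonneg y, hd0.le]
      have h2 : ((1 + ‖y‖) * (1 + d)) ^ n = (1 + ‖y‖) ^ n * (1 + d) ^ n := mul_pow _ _ _
      have h3 : (1 + ‖y‖) ^ n ≤ 2 ^ n * (1 + ‖y‖ ^ n) :=
        aux_one_add_pow_le n ‖y‖ (norm_nonneg y)
      have h4 : (1:ℝ) ≤ (1 + ‖y‖) ^ n * (1 + d) ^ n := by
        apply one_le_mul_of_one_le_of_one_le <;>
          · apply one_le_pow₀; nlinarith [norm_nonneg y, hd0.le]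
      have h5 : (1 + ‖y‖) ^ n * (1 + d) ^ n ≤ 2 ^ n * (1 + ‖y‖ ^ n) * (1 + d) ^ n := by
        apply mul_le_mul_of_nonneg_right h3 (by positivity)
      calc 1 + ‖x‖ ^ n ≤ 2 * ((1 + ‖y‖) ^ n * (1 + d) ^ n) := by
            rw [h2] at h1; nlinarith
        _ ≤ 2 * (2 ^ n * (1 + ‖y‖ ^ n) * (1 + d) ^ n) := by linarith
        _ = 2 ^ (n + 1) * (1 + d) ^ n * (1 + ‖y‖ ^ n) := by ring
    -- radial factor bound
    have hrad : d ^ (-(1/2 : ℝ)) ≤ r₁ ^ (-(1/2 : ℝ)) :=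
      Real.rpow_le_rpow_of_nonpos hr hd (by norm_num)
    have hradpos : (0:ℝ) ≤ d ^ (-(1/2 : ℝ)) := Real.rpow_nonneg hd0.le _
    -- combine
    have hkey := key d hd0.le
    have h5 : (1 + d) ^ n / Real.exp (a * d) ≤ K / (1 + d) ^ 3 := by
      rw [div_le_div_iff₀ hE0 (by positivity)]
      calc (1 + d) ^ n * (1 + d) ^ 3 = (1 + d) ^ m := by rw [← pow_add]
        _ ≤ K * Real.exp (a * d) := hkey
    have hPneg : (1 + d) ^ (-(3 : ℝ)) = ((1 + d) ^ 3)⁻¹ := by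
      rw [Real.rpow_neg hP0.le,
        show ((1 + d):ℝ) ^ (3:ℝ) = (1 + d) ^ (3:ℕ) by
          rw [← Real.rpow_natCast (1 + d) 3]; norm_num]
    have hEneg : Real.exp (-a * d) = (Real.exp (a * d))⁻¹ := by
      rw [neg_mul, Real.exp_neg]
    rw [hEneg]
    rw [show (1 + ‖x - y‖ : ℝ) = 1 + d by rw [hd_def, dist_eq_norm], hPneg]
    have hR0 : (0:ℝ) ≤ (1 + ‖x‖ ^ n) / (1 + ‖y‖ ^ n) := by positivity
    calc (1 + ‖x‖ ^ n) / (1 + ‖y‖ ^ n) * d ^ (-(1/2 : ℝ)) * (Real.exp (a * d))⁻¹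
        ≤ 2 ^ (n + 1) * (1 + d) ^ n * d ^ (-(1/2 : ℝ)) * (Real.exp (a * d))⁻¹ := by
          apply mul_le_mul_of_nonneg_right _ (by positivity)
          exact mul_le_mul_of_nonneg_right hratio hradpos
      _ = (2 ^ (n + 1) * d ^ (-(1/2 : ℝ))) * ((1 + d) ^ n / Real.exp (a * d)) := by
          rw [div_eq_mul_inv]; ring
      _ ≤ (2 ^ (n + 1) * r₁ ^ (-(1/2 : ℝ))) * (K / (1 + d) ^ 3) := by
          apply mul_le_mul _ h5 (by positivity) (by positivity)
          exact mul_le_mul_of_nonneg_left hrad (by positivity)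
      _ = C * ((1 + d) ^ 3)⁻¹ := by rw [hC_def, div_eq_mul_inv]; ring
  -- the integrable comparison function
  have hfin : (∫⁻ y : EuclideanSpace ℝ (Fin 2),
      ENNReal.ofReal ((1 + ‖y‖) ^ (-(3 : ℝ)))) < ⊤ := by
    apply finite_integral_one_add_norm
    simp only [finrank_euclideanSpace_fin]
    norm_num
  have hM : ENNReal.ofReal C *
      (∫⁻ y : EuclideanSpace ℝ (Fin 2), ENNReal.ofReal ((1 + ‖y‖) ^ (-(3:ℝ)))) < ⊤ :=
    ENNReal.mul_lt_top ENNReal.ofReal_lt_top hfin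
  refine lt_of_le_of_lt (iSup_le fun x => ?_) hM
  have hmeas : Measurable fun y : EuclideanSpace ℝ (Fin 2) =>
      ENNReal.ofReal (C * (1 + ‖x - y‖) ^ (-(3 : ℝ))) := by
    have h1 : Continuous fun y : EuclideanSpace ℝ (Fin 2) => (1 + ‖x - y‖) := by continuity
    have h2 : Continuous fun y : EuclideanSpace ℝ (Fin 2) => (1 + ‖x - y‖) ^ (-(3:ℝ)) :=
      h1.rpow_const (fun y => Or.inl (by positivity))
    exact ENNReal.measurable_ofReal.comp ((h2.measurable).const_mul C)
  calc ∫⁻ y in {y : EuclideanSpace ℝ (Fin 2) | r₁ ≤ dist x y},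
        ENNReal.ofReal (((1 + ‖x‖ ^ n) / (1 + ‖y‖ ^ n)) *
          (dist x y) ^ (-(1 / 2 : ℝ)) * Real.exp (-a * dist x y))
      ≤ ∫⁻ y in {y : EuclideanSpace ℝ (Fin 2) | r₁ ≤ dist x y},
        ENNReal.ofReal (C * (1 + ‖x - y‖) ^ (-(3 : ℝ))) :=
        setLIntegral_mono hmeas (fun y hy => ENNReal.ofReal_le_ofReal (hbound x y hy))
    _ ≤ ∫⁻ y, ENNReal.ofReal (C * (1 + ‖x - y‖) ^ (-(3 : ℝ))) :=
        setLIntegral_le_lintegral _ _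
    _ = ENNReal.ofReal C * ∫⁻ y, ENNReal.ofReal ((1 + ‖x - y‖) ^ (-(3 : ℝ))) := by
        simp_rw [ENNReal.ofReal_mul hC0.le]
        exact lintegral_const_mul' _ _ ENNReal.ofReal_ne_top
    _ = ENNReal.ofReal C * ∫⁻ y, ENNReal.ofReal ((1 + ‖y‖) ^ (-(3 : ℝ))) := by
        congr 1
        have : ∀ y : EuclideanSpace ℝ (Fin 2), ‖x - y‖ = ‖y + (-x)‖ := by
          intro y; rw [← norm_neg]; congr 1; abel
        simp_rw [this]
        exact lintegral_add_right_eq_self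
          (fun y => ENNReal.ofReal ((1 + ‖y‖) ^ (-(3 : ℝ)))) (-x)
end

section
/- Let A₁, A₂ : ℝ² → ℝ be C¹ functions for which there exist constants C > 0 and ε > 0 such that |A₁(x)| ≤ C(1 + |x|)^{−1−ε} and |A₂(x)| ≤ C(1 + |x|)^{−1−ε} for all x ∈ ℝ², and suppose the curl F := ∂₁A₂ − ∂₂A₁ is Lebesgue integrable on ℝ². Then ∫_{ℝ²} F(x) dx = 0. -/
open MeasureTheory

/-- Partial derivative in the `i`-th coordinate direction of `ℝ²`. -/
noncomputable def pd (i : Fin 2) (f : EuclideanSpace ℝ (Fin 2) → ℝ) :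
    EuclideanSpace ℝ (Fin 2) → ℝ :=
  fun x => fderiv ℝ f x (EuclideanSpace.single i 1)

/-!
Green's theorem turns the integral of the curl over the square `[-R, R]²` into the circulation
of `(A₁, A₂)` around its boundary. The boundary has length `8R` and lies in `{|x| ≥ R}`, so any
decay `Aᵢ(x) = o(1/|x|)` (such as `(1 + |x|)^(-1-ε)`) makes the circulation tend to `0`, while
integrability of the curl makes the square integrals tend to the total flux.
-/

open Set Filter Topology Asymptotics Bornology

section Plane

variable {E : Type*} [NormedAddCommGroup E] [NormedSpace ℝ E]

theorem tendsto_setIntegral_square {h : ℝ × ℝ → E} (hh : Integrable h) :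
    Tendsto (fun R : ℝ => ∫ p in Icc (-R, -R) (R, R), h p) atTop (𝓝 (∫ p, h p)) :=
  (aecover_Icc (tendsto_atBot_diagonal.comp tendsto_neg_atTop_atBot)
    tendsto_atTop_diagonal).integral_tendsto_of_countably_generated hh

theorem tendsto_intervalIntegral_of_isLittleO {X : Type*} [NormedAddCommGroup X] {f : X → E}
    (hf : f =o[cobounded X] fun p => ‖p‖⁻¹) {γ : ℝ → ℝ → X} (hγ : ∀ R x, ‖R‖ ≤ ‖γ R x‖) :
    Tendsto (fun R => ∫ x in -R..R, f (γ R x)) atTop (𝓝 0) := by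
  refine isLittleO_one_iff ℝ |>.mp <| IsLittleO.of_bound fun c hc => ?_
  obtain ⟨R₀, -, hR₀⟩ := (hasBasis_cobounded_norm.eventually_iff).mp (hf.bound (half_pos hc))
  filter_upwards [eventually_ge_atTop (max R₀ 1)] with R hR
  have hR_pos : 0 < R := one_pos.trans_le (le_of_max_le_right hR)
  have hbound : ∀ x, ‖f (γ R x)‖ ≤ c / 2 * R⁻¹ := fun x => by
    have hRγ : R ≤ ‖γ R x‖ := (le_abs_self R).trans (hγ R x)
    calc ‖f (γ R x)‖ ≤ c / 2 * ‖‖γ R x‖⁻¹‖ := hR₀ ((le_of_max_le_left hR).trans hRγ)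
      _ = c / 2 * ‖γ R x‖⁻¹ := by rw [norm_inv, norm_norm]
      _ ≤ c / 2 * R⁻¹ := by gcongr
  calc ‖∫ x in -R..R, f (γ R x)‖ ≤ c / 2 * R⁻¹ * |R - -R| :=
        intervalIntegral.norm_integral_le_of_norm_le_const fun x _ => hbound x
    _ = c * ‖(1 : ℝ)‖ := by
        rw [sub_neg_eq_add, abs_of_pos (by linarith), norm_one]
        field_simp
        ring

theorem integral_divergence_eq_zero_of_isLittleO {f g : ℝ × ℝ → E}
    (hf : Differentiable ℝ f) (hg : Differentiable ℝ g)
    (hdiv : Integrable fun p => fderiv ℝ f p (1, 0) + fderiv ℝ g p (0, 1))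
    (hf_decay : f =o[cobounded (ℝ × ℝ)] fun p => ‖p‖⁻¹)
    (hg_decay : g =o[cobounded (ℝ × ℝ)] fun p => ‖p‖⁻¹) :
    ∫ p, fderiv ℝ f p (1, 0) + fderiv ℝ g p (0, 1) = 0 := by
  have green : ∀ R : ℝ, 0 ≤ R →
      ∫ p in Icc (-R, -R) (R, R), fderiv ℝ f p (1, 0) + fderiv ℝ g p (0, 1) =
        (((∫ x in -R..R, g (x, R)) - ∫ x in -R..R, g (x, -R)) + ∫ y in -R..R, f (R, y)) -
          ∫ y in -R..R, f (-R, y) := fun R hR =>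
    integral_divergence_prod_Icc_of_hasFDerivAt_off_countable_of_le f g _ _ (-R, -R) (R, R)
      ⟨neg_le_self hR, neg_le_self hR⟩ ∅ countable_empty hf.continuous.continuousOn
      hg.continuous.continuousOn (fun p _ => (hf p).hasFDerivAt) (fun p _ => (hg p).hasFDerivAt)
      hdiv.integrableOn
  have hboundary : Tendsto (fun R : ℝ => (((∫ x in -R..R, g (x, R)) - ∫ x in -R..R, g (x, -R)) +
      ∫ y in -R..R, f (R, y)) - ∫ y in -R..R, f (-R, y)) atTop (𝓝 0) := by
    simpa using (((tendsto_intervalIntegral_of_isLittleO hg_decay (γ := fun R x => (x, R))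
      fun R _ => le_max_right _ _).sub
      (tendsto_intervalIntegral_of_isLittleO hg_decay (γ := fun R x => (x, -R))
        fun R _ => (norm_neg R).ge.trans (le_max_right _ _))).add
      (tendsto_intervalIntegral_of_isLittleO hf_decay (γ := fun R y => (R, y))
        fun R _ => le_max_left _ _)).sub
      (tendsto_intervalIntegral_of_isLittleO hf_decay (γ := fun R y => (-R, y))
        fun R _ => (norm_neg R).ge.trans (le_max_left _ _))
  exact tendsto_nhds_unique (tendsto_setIntegral_square hdiv)
    (hboundary.congr' ((eventually_ge_atTop 0).mono fun R hR => (green R hR).symm))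

end Plane

theorem isLittleO_one_add_rpow_neg_one_sub_inv {ε : ℝ} (hε : 0 < ε) :
    (fun r : ℝ => (1 + r) ^ (-1 - ε)) =o[atTop] fun r => r⁻¹ := by
  refine IsLittleO.of_bound fun c hc => ?_
  have hsmall : ∀ᶠ r : ℝ in atTop, (1 + r) ^ (-ε) ≤ c :=
    ((tendsto_rpow_neg_atTop hε).comp (tendsto_atTop_add_const_left _ 1 tendsto_id)).eventually
      (eventually_le_nhds hc)
  filter_upwards [hsmall, eventually_gt_atTop 0] with r hr hr_pos
  have h1r : 0 < 1 + r := by linarith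
  calc ‖(1 + r) ^ (-1 - ε)‖ = (1 + r) ^ (-ε) * (1 + r)⁻¹ := by
        rw [Real.norm_of_nonneg (by positivity), sub_eq_neg_add, Real.rpow_add h1r,
          Real.rpow_neg_one, mul_comm]
    _ ≤ c * r⁻¹ := by gcongr; linarith
    _ = c * ‖r⁻¹‖ := by rw [Real.norm_of_nonneg (by positivity)]

theorem isLittleO_inv_norm_of_abs_le_rpow {X : Type*} [NormedAddCommGroup X] {A : X → ℝ}
    {C ε : ℝ} (hε : 0 < ε) (hA : ∀ x, |A x| ≤ C * (1 + ‖x‖) ^ (-1 - ε)) :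
    A =o[cobounded X] fun x => ‖x‖⁻¹ := by
  have hA_bigO : A =O[cobounded X] fun x => (1 + ‖x‖) ^ (-1 - ε) :=
    IsBigO.of_bound C <| Eventually.of_forall fun x => (hA x).trans_eq <| by
      rw [Real.norm_of_nonneg (by positivity)]
  exact hA_bigO.trans_isLittleO
    ((isLittleO_one_add_rpow_neg_one_sub_inv hε).comp_tendsto tendsto_norm_cobounded_atTop)

noncomputable def planeEquiv : (ℝ × ℝ) ≃L[ℝ] EuclideanSpace ℝ (Fin 2) :=
  (ContinuousLinearEquiv.finTwoArrow ℝ ℝ).symm.trans (EuclideanSpace.equiv (Fin 2) ℝ).symm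

theorem planeEquiv_measurePreserving : MeasurePreserving planeEquiv :=
  ((EuclideanSpace.volume_preserving_symm_measurableEquiv_toLp (Fin 2)).symm _).comp
    ((volume_preserving_finTwoArrow ℝ).symm _)

theorem norm_le_norm_planeEquiv (p : ℝ × ℝ) : ‖p‖ ≤ ‖planeEquiv p‖ :=
  max_le (PiLp.norm_apply_le (planeEquiv p) 0) (PiLp.norm_apply_le (planeEquiv p) 1)

theorem planeEquiv_one_zero : planeEquiv (1, 0) = EuclideanSpace.single 0 1 := by
  ext i; fin_cases i <;> simp [planeEquiv, EuclideanSpace.single, EuclideanSpace.equiv]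

theorem planeEquiv_zero_one : planeEquiv (0, 1) = EuclideanSpace.single 1 1 := by
  ext i; fin_cases i <;> simp [planeEquiv, EuclideanSpace.single, EuclideanSpace.equiv]

theorem Asymptotics.IsLittleO.comp_planeEquiv {A : EuclideanSpace ℝ (Fin 2) → ℝ}
    (hA : A =o[cobounded _] fun x => ‖x‖⁻¹) :
    (A ∘ planeEquiv) =o[cobounded (ℝ × ℝ)] fun p => ‖p‖⁻¹ := by
  refine (hA.comp_tendsto ?_).trans_isBigO (IsBigO.of_bound 1 ?_)
  · exact tendsto_norm_atTop_iff_cobounded.mp (tendsto_atTop_mono norm_le_norm_planeEquiv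
      tendsto_norm_cobounded_atTop)
  · filter_upwards [eventually_cobounded_le_norm 1] with p hp
    simpa using inv_anti₀ (by linarith) (norm_le_norm_planeEquiv p)

theorem integral_curl_eq_zero_of_isLittleO {A₁ A₂ : EuclideanSpace ℝ (Fin 2) → ℝ}
    (hA₁ : Differentiable ℝ A₁) (hA₂ : Differentiable ℝ A₂)
    (hcurl : Integrable fun x => pd 0 A₂ x - pd 1 A₁ x)
    (hA₁_decay : A₁ =o[cobounded _] fun x => ‖x‖⁻¹)
    (hA₂_decay : A₂ =o[cobounded _] fun x => ‖x‖⁻¹) :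
    ∫ x, pd 0 A₂ x - pd 1 A₁ x = 0 := by
  have hcurl_comp : (fun x => pd 0 A₂ x - pd 1 A₁ x) ∘ planeEquiv =
      fun p => fderiv ℝ (A₂ ∘ planeEquiv) p (1, 0) + fderiv ℝ (-(A₁ ∘ planeEquiv)) p (0, 1) := by
    ext p
    simp [pd, fderiv_neg, planeEquiv.comp_right_fderiv, planeEquiv_one_zero, planeEquiv_zero_one,
      sub_eq_add_neg]
  have hemb := planeEquiv.toHomeomorph.measurableEmbedding
  have hdiv := (planeEquiv_measurePreserving.integrable_comp_emb hemb).mpr hcurl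
  rw [hcurl_comp] at hdiv
  rw [← planeEquiv_measurePreserving.integral_comp hemb]
  change ∫ p, ((fun x => pd 0 A₂ x - pd 1 A₁ x) ∘ planeEquiv) p = 0
  rw [hcurl_comp]
  exact integral_divergence_eq_zero_of_isLittleO
    (hA₂.comp planeEquiv.differentiable) (hA₁.comp planeEquiv.differentiable).neg hdiv
    hA₂_decay.comp_planeEquiv hA₁_decay.comp_planeEquiv.neg_left

theorem flux_of_decaying_potential_vanishes_general
    (A₁ A₂ : EuclideanSpace ℝ (Fin 2) → ℝ)
    (hA₁ : ContDiff ℝ 1 A₁) (hA₂ : ContDiff ℝ 1 A₂)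
    (C ε : ℝ) (hε : 0 < ε)
    (hb₁ : ∀ x, |A₁ x| ≤ C * (1 + ‖x‖) ^ (-1 - ε : ℝ))
    (hb₂ : ∀ x, |A₂ x| ≤ C * (1 + ‖x‖) ^ (-1 - ε : ℝ))
    (F : EuclideanSpace ℝ (Fin 2) → ℝ)
    (hF : F = fun x => pd 0 A₂ x - pd 1 A₁ x)
    (hInt : Integrable F) :
    ∫ x, F x = 0 := by
  subst hF
  exact integral_curl_eq_zero_of_isLittleO (hA₁.differentiable one_ne_zero)
    (hA₂.differentiable one_ne_zero) hInt (isLittleO_inv_norm_of_abs_le_rpow hε hb₁)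
    (isLittleO_inv_norm_of_abs_le_rpow hε hb₂)

/-- If `A₁, A₂` are `C¹` on `ℝ²` with `|Aᵢ(x)| ≤ C (1 + |x|)^{-1-ε}` and the curl
`F = ∂₁A₂ - ∂₂A₁` is Lebesgue integrable, then the total flux `∫ F` vanishes. -/
theorem flux_of_decaying_potential_vanishes
    (A₁ A₂ : EuclideanSpace ℝ (Fin 2) → ℝ)
    (hA₁ : ContDiff ℝ 1 A₁) (hA₂ : ContDiff ℝ 1 A₂)
    (C ε : ℝ) (hC : 0 < C) (hε : 0 < ε)
    (hb₁ : ∀ x, |A₁ x| ≤ C * (1 + ‖x‖) ^ (-1 - ε : ℝ))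
    (hb₂ : ∀ x, |A₂ x| ≤ C * (1 + ‖x‖) ^ (-1 - ε : ℝ))
    (F : EuclideanSpace ℝ (Fin 2) → ℝ)
    (hF : F = fun x => pd 0 A₂ x - pd 1 A₁ x)
    (hInt : Integrable F) :
    ∫ x, F x = 0 :=
  flux_of_decaying_potential_vanishes_general A₁ A₂ hA₁ hA₂ C ε hε hb₁ hb₂ F hF hInt
end

section
/- Fix θ > 0 and define f : [0, ∞) → ℝ by the everywhere-convergent power series f(x) = Σ_{n=0}^{∞} x^{2n+1} / ( n! · θ^n · √((n+1)θ) ). Then for every x ≥ 0, e^{−x²/θ} f(x) ≤ ∫₀^{∞} (√θ / t²) (1 − e^{−t²/θ}) dt; in particular, the function x ↦ e^{−x²/θ} f(x) is bounded on [0, ∞). -/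
/-!
Write `u = x²/θ` and `c n = uⁿ/n!`. The `n`-th term of `f x` is exactly `√(c n · c (n+1))`, so
AM–GM bounds it by `(c n + c (n+1))/2` and summing gives `f x ≤ Σ c n = e^u`, i.e.
`e^{-x²/θ} f x ≤ 1`. On the other side, `s/(1+s) ≤ 1 - e^{-s}` with `s = t²/θ` bounds the
integrand below by `√θ/(θ + t²)`, whose integral over `(0, ∞)` is `π/2 > 1`; the companion bound
`1 - e^{-s} ≤ 2s/(1+s)` bounds it above by twice that function, which gives integrability.
-/

open MeasureTheory Real Set Filter Topology

theorem sqrt_mul_le_add_div_two {a b : ℝ} (ha : 0 ≤ a) (hb : 0 ≤ b) : √(a * b) ≤ (a + b) / 2 := by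
  rw [Real.sqrt_le_left (by positivity)]
  nlinarith [sq_nonneg (a - b)]

theorem tsum_sqrt_mul_succ_le_tsum {c : ℕ → ℝ} (hc : ∀ n, 0 ≤ c n) (hs : Summable c) :
    ∑' n, √(c n * c (n + 1)) ≤ ∑' n, c n := by
  have hs' : Summable fun n => c (n + 1) := (summable_nat_add_iff 1).2 hs
  have hamgm n : √(c n * c (n + 1)) ≤ (c n + c (n + 1)) / 2 :=
    sqrt_mul_le_add_div_two (hc n) (hc (n + 1))
  have hshift : ∑' n, c (n + 1) ≤ ∑' n, c n := by
    rw [hs.tsum_eq_zero_add]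
    linarith [hc 0]
  calc ∑' n, √(c n * c (n + 1))
      ≤ ∑' n, (c n + c (n + 1)) / 2 :=
        Summable.tsum_le_tsum hamgm
          (((hs.add hs').div_const 2).of_nonneg_of_le (fun n => Real.sqrt_nonneg _) hamgm)
          ((hs.add hs').div_const 2)
    _ = ((∑' n, c n) + ∑' n, c (n + 1)) / 2 := by rw [tsum_div_const, hs.tsum_add hs']
    _ ≤ ∑' n, c n := by linarith

theorem vortex_term_eq_sqrt_mul {θ x : ℝ} (hθ : 0 < θ) (hx : 0 ≤ x) (n : ℕ) :
    x ^ (2 * n + 1) / ((n.factorial : ℝ) * θ ^ n * √((n + 1) * θ)) =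
      √((x ^ 2 / θ) ^ n / n.factorial * ((x ^ 2 / θ) ^ (n + 1) / (n + 1).factorial)) := by
  have hprod : (x ^ 2 / θ) ^ n / n.factorial * ((x ^ 2 / θ) ^ (n + 1) / (n + 1).factorial) =
      (x ^ (2 * n + 1) / (n.factorial * θ ^ n)) ^ 2 / ((n + 1) * θ) := by
    rw [Nat.factorial_succ, div_pow, div_pow, div_pow]
    push_cast
    field_simp
    ring
  rw [hprod, Real.sqrt_div' _ (by positivity), Real.sqrt_sq (by positivity), div_div]

theorem vortex_series_le_exp {θ x : ℝ} (hθ : 0 < θ) (hx : 0 ≤ x) :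
    ∑' n : ℕ, x ^ (2 * n + 1) / ((n.factorial : ℝ) * θ ^ n * √((n + 1) * θ)) ≤
      exp (x ^ 2 / θ) := by
  simp_rw [vortex_term_eq_sqrt_mul hθ hx]
  rw [Real.exp_eq_exp_ℝ, ← (NormedSpace.expSeries_div_hasSum_exp (x ^ 2 / θ)).tsum_eq]
  exact tsum_sqrt_mul_succ_le_tsum (fun n => by positivity) (Real.summable_pow_div_factorial _)

theorem hasDerivAt_arctan_div {a : ℝ} (ha : 0 < a) (t : ℝ) :
    HasDerivAt (fun s => arctan (s / a)) (a / (a ^ 2 + t ^ 2)) t := by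
  refine ((hasDerivAt_id' t).div_const a).arctan.congr_deriv ?_
  field_simp

theorem tendsto_arctan_div_atTop {a : ℝ} (ha : 0 < a) :
    Tendsto (fun s => arctan (s / a)) atTop (𝓝 (π / 2)) :=
  (tendsto_nhds_of_tendsto_nhdsWithin tendsto_arctan_atTop).comp
    (tendsto_id.atTop_div_const ha)

theorem integrableOn_Ioi_div_sq_add_sq {a : ℝ} (ha : 0 < a) :
    IntegrableOn (fun t => a / (a ^ 2 + t ^ 2)) (Ioi 0) :=
  integrableOn_Ioi_deriv_of_nonneg (by fun_prop) (fun t _ => hasDerivAt_arctan_div ha t)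
    (fun t _ => by positivity) (tendsto_arctan_div_atTop ha)

theorem integral_Ioi_div_sq_add_sq {a : ℝ} (ha : 0 < a) :
    ∫ t in Ioi 0, a / (a ^ 2 + t ^ 2) = π / 2 := by
  rw [integral_Ioi_of_hasDerivAt_of_nonneg (by fun_prop) (fun t _ => hasDerivAt_arctan_div ha t)
    (fun t _ => by positivity) (tendsto_arctan_div_atTop ha)]
  simp

theorem div_one_add_le_one_sub_exp_neg {s : ℝ} (hs : 0 ≤ s) : s / (1 + s) ≤ 1 - exp (-s) := by
  have hexp : exp (-s) ≤ 1 / (1 + s) := by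
    rw [exp_neg, ← one_div]
    exact one_div_le_one_div_of_le (by positivity) (by linarith [add_one_le_exp s])
  have hsplit : s / (1 + s) = 1 - 1 / (1 + s) := by field_simp; ring
  linarith

theorem one_sub_exp_neg_le_two_mul_div_one_add {s : ℝ} (hs : 0 ≤ s) :
    1 - exp (-s) ≤ 2 * s / (1 + s) := by
  rw [le_div_iff₀ (by positivity)]
  rcases le_total s 1 with h | h
  · nlinarith [add_one_le_exp (-s), exp_pos (-s)]
  · nlinarith [exp_pos (-s)]

theorem vortex_integrand_bounds {θ t : ℝ} (hθ : 0 < θ) (ht : t ≠ 0) :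
    √θ / (√θ ^ 2 + t ^ 2) ≤ √θ / t ^ 2 * (1 - exp (-t ^ 2 / θ)) ∧
      √θ / t ^ 2 * (1 - exp (-t ^ 2 / θ)) ≤ 2 * (√θ / (√θ ^ 2 + t ^ 2)) := by
  have hs : 0 ≤ t ^ 2 / θ := by positivity
  have hscale : √θ / (√θ ^ 2 + t ^ 2) = √θ / t ^ 2 * (t ^ 2 / θ / (1 + t ^ 2 / θ)) := by
    rw [sq_sqrt hθ.le]
    field_simp
  rw [hscale, neg_div]
  constructor
  · gcongr
    exact div_one_add_le_one_sub_exp_neg hs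
  · rw [← mul_left_comm, ← mul_div_assoc]
    gcongr
    exact one_sub_exp_neg_le_two_mul_div_one_add hs

theorem integrableOn_vortex_integrand {θ : ℝ} (hθ : 0 < θ) :
    IntegrableOn (fun t => √θ / t ^ 2 * (1 - exp (-t ^ 2 / θ))) (Ioi 0) := by
  refine ((integrableOn_Ioi_div_sq_add_sq (sqrt_pos.2 hθ)).const_mul 2).mono'
    (by fun_prop) ?_
  filter_upwards [ae_restrict_mem measurableSet_Ioi] with t ht
  have hbounds := vortex_integrand_bounds hθ (ne_of_gt ht)
  rw [norm_of_nonneg (by linarith [hbounds.1, (by positivity : 0 ≤ √θ / (√θ ^ 2 + t ^ 2))])]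
  exact hbounds.2

theorem one_le_integral_vortex_integrand {θ : ℝ} (hθ : 0 < θ) :
    1 ≤ ∫ t in Ioi 0, √θ / t ^ 2 * (1 - exp (-t ^ 2 / θ)) :=
  calc 1 ≤ π / 2 := by linarith [pi_gt_three]
    _ = ∫ t in Ioi 0, √θ / (√θ ^ 2 + t ^ 2) := (integral_Ioi_div_sq_add_sq (sqrt_pos.2 hθ)).symm
    _ ≤ _ := setIntegral_mono_on (integrableOn_Ioi_div_sq_add_sq (sqrt_pos.2 hθ))
        (integrableOn_vortex_integrand hθ) measurableSet_Ioi
        (fun t ht => (vortex_integrand_bounds hθ (ne_of_gt ht)).1)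

/-- For `θ > 0` and `f(x) = Σ_{n≥0} x^{2n+1}/(n! θ^n √((n+1)θ))`, the modulus
`e^{-x²/θ} f(x)` of the Fock-space noncommutative vortex solution satisfies
`e^{-x²/θ} f(x) ≤ ∫₀^∞ (√θ/t²)(1 - e^{-t²/θ}) dt` for all `x ≥ 0`; in particular
it is bounded on `[0, ∞)`. -/
theorem fock_vortex_solution_bounded (θ : ℝ) (hθ : 0 < θ)
    (f : ℝ → ℝ)
    (hf : f = fun x => ∑' n : ℕ,
      x ^ (2 * n + 1) / ((n.factorial : ℝ) * θ ^ n * Real.sqrt ((n + 1) * θ))) :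
    (∀ x : ℝ, 0 ≤ x →
      Real.exp (-x ^ 2 / θ) * f x ≤
        ∫ t in Set.Ioi (0 : ℝ), (Real.sqrt θ / t ^ 2) * (1 - Real.exp (-t ^ 2 / θ))) ∧
    ∃ M : ℝ, ∀ x : ℝ, 0 ≤ x → |Real.exp (-x ^ 2 / θ) * f x| ≤ M := by
  subst hf
  have hle_one : ∀ x, 0 ≤ x → exp (-x ^ 2 / θ) * (∑' n : ℕ,
      x ^ (2 * n + 1) / ((n.factorial : ℝ) * θ ^ n * √((n + 1) * θ))) ≤ 1 := fun x hx => by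
    rw [neg_div, exp_neg, inv_mul_le_iff₀ (exp_pos _), mul_one]
    exact vortex_series_le_exp hθ hx
  refine ⟨fun x hx => (hle_one x hx).trans (one_le_integral_vortex_integrand hθ),
    1, fun x hx => ?_⟩
  rw [abs_of_nonneg (mul_nonneg (exp_pos _).le (tsum_nonneg fun n => by positivity))]
  exact hle_one x hx
end

section
/- Fix θ > 0 and define f : [0, ∞) → ℝ by the everywhere-convergent power series f(x) = Σ_{n=0}^{∞} x^{2n+1} / ( n! · θ^n · √((n+1)θ) ). Then f is differentiable on (0, ∞) and for every x > 0 the strict differential inequality f′(x) − (2x/θ) f(x) < (√θ / x²) ( e^{x²/θ} − 1 ) holds. -/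
/-!
In powers of `x²`, the series `f' - (2x/θ) f` has constant term `θ^(-1/2)` and, for `m ≥ 1`,
coefficient `((2m+1)/√(m+1) - 2√m) / (m! θ^m √θ)`, while `(√θ/x²)(e^{x²/θ} - 1)` has
coefficients `1 / ((m+1)! θ^m √θ)`. The constant terms agree, and for `m ≥ 1` the comparison
is `(2m+1)/√(m+1) - 2√m < 1/(m+1)`; after clearing square roots this is `√m < 4(m+1)`.
-/

open Real Nat

theorem two_mul_add_one_div_sqrt_sub_lt {t : ℝ} (ht : 0 < t) :
    (2 * t + 1) / √(t + 1) - 2 * √t < 1 / (t + 1) := by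
  obtain ⟨a, ha, rfl⟩ : ∃ a, 0 < a ∧ a ^ 2 = t := ⟨√t, sqrt_pos.2 ht, sq_sqrt ht.le⟩
  obtain ⟨b, hb, hb2⟩ : ∃ b, 0 < b ∧ b ^ 2 = a ^ 2 + 1 :=
    ⟨√(a ^ 2 + 1), sqrt_pos.2 (by positivity), sq_sqrt (by positivity)⟩
  rw [sqrt_sq ha.le, ← hb2, sqrt_sq hb.le]
  have key : (2 * a ^ 2 + 1) * b < 1 + 2 * a * b ^ 2 := by
    refine (pow_lt_pow_iff_left₀ (by positivity) (by positivity) two_ne_zero).1 ?_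
    rw [mul_pow, hb2]
    nlinarith [sq_nonneg (a - 1), mul_pos ha hb]
  rw [div_sub' hb.ne', div_lt_div_iff₀ hb (by positivity)]
  nlinarith

section OddPowerSeries

variable {c : ℕ → ℝ} (hc : ∀ r, Summable fun n : ℕ => (2 * n + 1) * |c n| * r ^ (2 * n))
include hc

theorem summable_mul_pow_two_mul_add_one (x : ℝ) :
    Summable fun n => c n * x ^ (2 * n + 1) := by
  refine .of_norm_bounded ((hc |x|).mul_left |x|) fun n => ?_
  have h1 : (1 : ℝ) ≤ 2 * n + 1 := by linarith [n.cast_nonneg (α := ℝ)]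
  rw [norm_mul, norm_pow, pow_succ, Real.norm_eq_abs, Real.norm_eq_abs]
  calc |c n| * (|x| ^ (2 * n) * |x|) = |x| * (1 * |c n| * |x| ^ (2 * n)) := by ring
    _ ≤ |x| * ((2 * n + 1) * |c n| * |x| ^ (2 * n)) := by gcongr

theorem summable_two_mul_add_one_mul_pow_two_mul (x : ℝ) :
    Summable fun n : ℕ => (2 * n + 1) * c n * x ^ (2 * n) := by
  refine .of_norm_bounded (hc |x|) fun n => le_of_eq ?_
  rw [norm_mul, norm_mul, norm_pow, Real.norm_eq_abs, Real.norm_eq_abs, Real.norm_eq_abs,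
    abs_of_pos (by positivity : (0 : ℝ) < 2 * n + 1)]

theorem hasDerivAt_tsum_mul_pow_two_mul_add_one (x : ℝ) :
    HasDerivAt (fun y => ∑' n, c n * y ^ (2 * n + 1))
      (∑' n : ℕ, (2 * n + 1) * c n * x ^ (2 * n)) x := by
  have hx : x ∈ Metric.ball (0 : ℝ) (|x| + 1) := by simp
  refine hasDerivAt_tsum_of_isPreconnected (g := fun n y => c n * y ^ (2 * n + 1))
    (g' := fun n y => (2 * n + 1) * c n * y ^ (2 * n)) (hc (|x| + 1)) Metric.isOpen_ball
    (convex_ball _ _).isPreconnected (fun n y _ => ?_) (fun n y hy => ?_) hx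
    (summable_mul_pow_two_mul_add_one hc x) hx
  · refine ((hasDerivAt_pow (2 * n + 1) y).const_mul (c n)).congr_deriv ?_
    rw [Nat.add_sub_cancel]
    push_cast
    ring
  · rw [mem_ball_zero_iff] at hy
    rw [norm_mul, norm_mul, norm_pow, Real.norm_eq_abs, Real.norm_eq_abs,
      abs_of_pos (by positivity : (0 : ℝ) < 2 * n + 1)]
    gcongr

theorem hasSum_two_mul_add_one_mul_pow_sub_mul_tsum (k x : ℝ) :
    HasSum (fun n : ℕ => ((2 * (n + 1) + 1) * c (n + 1) - k * c n) * x ^ (2 * n + 2))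
      (∑' n : ℕ, (2 * n + 1) * c n * x ^ (2 * n) - k * x * ∑' n, c n * x ^ (2 * n + 1) - c 0) := by
  have hderiv := ((hasSum_nat_add_iff' 1).2
    (summable_two_mul_add_one_mul_pow_two_mul hc x).hasSum)
  have hodd := (summable_mul_pow_two_mul_add_one hc x).hasSum.mul_left (k * x)
  convert! hderiv.sub hodd using 1
  · ext n
    push_cast
    ring
  · simp only [Finset.sum_range_one, CharP.cast_eq_zero, mul_zero, zero_add, one_mul, pow_zero,
      mul_one]
    ring

end OddPowerSeries

noncomputable def vortexCoeff (θ : ℝ) (n : ℕ) : ℝ := ((n ! : ℝ) * θ ^ n * √((n + 1) * θ))⁻¹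

theorem vortexCoeff_zero (θ : ℝ) : vortexCoeff θ 0 = (√θ)⁻¹ := by
  simp [vortexCoeff]

section VortexCoeff

variable {θ : ℝ} (hθ : 0 < θ)
include hθ

theorem vortexCoeff_pos (n : ℕ) : 0 < vortexCoeff θ n := by
  unfold vortexCoeff; positivity

theorem vortexCoeff_le (n : ℕ) : vortexCoeff θ n ≤ ((n ! : ℝ) * θ ^ n * √θ)⁻¹ := by
  unfold vortexCoeff
  gcongr
  nlinarith [n.cast_nonneg (α := ℝ)]

theorem summable_two_mul_add_one_mul_abs_vortexCoeff_mul_pow (r : ℝ) :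
    Summable fun n : ℕ => (2 * n + 1) * |vortexCoeff θ n| * r ^ (2 * n) := by
  refine .of_nonneg_of_le (fun n => by rw [pow_mul]; positivity) (fun n => ?_)
    (((Real.summable_pow_div_factorial (2 * r ^ 2 / θ)).mul_left (2 / √θ)))
  have h2 : (2 * n + 1 : ℝ) ≤ 2 * 2 ^ n := by
    have : (n : ℝ) + 1 ≤ 2 ^ n := by exact_mod_cast n.lt_two_pow_self
    linarith
  calc (2 * n + 1) * |vortexCoeff θ n| * r ^ (2 * n)
      ≤ (2 * 2 ^ n) * ((n ! : ℝ) * θ ^ n * √θ)⁻¹ * (r ^ 2) ^ n := by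
        rw [abs_of_pos (vortexCoeff_pos hθ n), pow_mul]
        gcongr
        exacts [(vortexCoeff_pos hθ n).le, vortexCoeff_le hθ n]
    _ = 2 / √θ * ((2 * r ^ 2 / θ) ^ n / n !) := by
        rw [div_pow, mul_pow]
        field_simp

theorem two_mul_add_one_mul_vortexCoeff_succ_sub_lt (n : ℕ) :
    (2 * (n + 1) + 1) * vortexCoeff θ (n + 1) - 2 / θ * vortexCoeff θ n
      < (((n + 2) ! : ℝ) * θ ^ (n + 1) * √θ)⁻¹ := by
  set m : ℝ := n + 1 with hm
  have hm0 : 0 < m := by positivity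
  set P : ℝ := ((n + 1) ! : ℝ) * θ ^ (n + 1) * √θ
  have hP : 0 < P := by positivity
  have hsm := sq_sqrt hm0.le
  have hsucc : ((n + 1) ! : ℝ) = m * n ! := by
    simp only [factorial_succ, cast_mul, cast_add_one, ← hm]
  have h1 : (2 * m + 1) * vortexCoeff θ (n + 1) = (2 * m + 1) / √(m + 1) / P := by
    simp only [vortexCoeff, P, cast_add_one, ← hm]
    rw [sqrt_mul (by positivity)]
    field_simp
  have h2 : 2 / θ * vortexCoeff θ n = 2 * √m / P := by
    simp only [vortexCoeff, P]
    rw [sqrt_mul hm0.le, hsucc]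
    field_simp
    rw [hsm]
    ring
  have h3 : (((n + 2) ! : ℝ) * θ ^ (n + 1) * √θ)⁻¹ = 1 / (m + 1) / P := by
    simp only [P]
    rw [factorial_succ (n + 1)]
    push_cast
    field_simp
    ring
  rw [h1, h2, h3, ← sub_div]
  exact div_lt_div_of_pos_right (two_mul_add_one_div_sqrt_sub_lt hm0) hP

theorem hasSum_sqrt_div_sq_mul_exp_sub_one {x : ℝ} (hx : x ≠ 0) :
    HasSum (fun n : ℕ => (((n + 2) ! : ℝ) * θ ^ (n + 1) * √θ)⁻¹ * x ^ (2 * n + 2))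
      (√θ / x ^ 2 * (exp (x ^ 2 / θ) - 1) - (√θ)⁻¹) := by
  have hexp := (hasSum_nat_add_iff' 2).2 (NormedSpace.expSeries_div_hasSum_exp (x ^ 2 / θ))
  rw [← Real.exp_eq_exp_ℝ] at hexp
  have hsθ := sq_sqrt hθ.le
  convert! hexp.mul_left (√θ / x ^ 2) using 1
  · ext n
    rw [div_pow]
    field_simp
    rw [hsθ]
    ring
  · simp only [Finset.sum_range_succ, Finset.sum_range_zero]
    field_simp
    simp only [factorial, cast_one, hsθ]
    ring

end VortexCoeff

/-- For `θ > 0` and `f(x) = Σ_{n≥0} x^{2n+1}/(n! θ^n √((n+1)θ))`, the function `f`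
is differentiable on `(0, ∞)` and satisfies the strict differential inequality
`f'(x) - (2x/θ) f(x) < (√θ/x²)(e^{x²/θ} - 1)` for every `x > 0`. -/
theorem fock_vortex_differential_inequality (θ : ℝ) (hθ : 0 < θ)
    (f : ℝ → ℝ)
    (hf : f = fun x => ∑' n : ℕ,
      x ^ (2 * n + 1) / ((n.factorial : ℝ) * θ ^ n * Real.sqrt ((n + 1) * θ))) :
    ∀ x : ℝ, 0 < x →
      DifferentiableAt ℝ f x ∧
      deriv f x - (2 * x / θ) * f x <
        (Real.sqrt θ / x ^ 2) * (Real.exp (x ^ 2 / θ) - 1) := by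
  have hf' : f = fun y => ∑' n, vortexCoeff θ n * y ^ (2 * n + 1) := by
    simp only [hf, vortexCoeff, div_eq_mul_inv, mul_comm]
  subst hf'
  intro x hx
  have hc := summable_two_mul_add_one_mul_abs_vortexCoeff_mul_pow hθ
  have hderiv := hasDerivAt_tsum_mul_pow_two_mul_add_one hc x
  have hterm (n : ℕ) :
      ((2 * (n + 1) + 1) * vortexCoeff θ (n + 1) - 2 / θ * vortexCoeff θ n) * x ^ (2 * n + 2)
        < (((n + 2) ! : ℝ) * θ ^ (n + 1) * √θ)⁻¹ * x ^ (2 * n + 2) :=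
    mul_lt_mul_of_pos_right (two_mul_add_one_mul_vortexCoeff_succ_sub_lt hθ n) (by positivity)
  have hlt := hasSum_lt (fun n => (hterm n).le) (hterm 0)
    (hasSum_two_mul_add_one_mul_pow_sub_mul_tsum hc (2 / θ) x)
    (hasSum_sqrt_div_sq_mul_exp_sub_one hθ hx.ne')
  refine ⟨hderiv.differentiableAt, ?_⟩
  rw [vortexCoeff_zero] at hlt
  rw [hderiv.deriv, show 2 * x / θ = 2 / θ * x by ring]
  linarith
end

section
/- Let V be the complex vector space of finitely supported sequences ℕ → ℂ with standard basis (e_j)_{j∈ℕ}, and define linear operators a, a† on V by a e₀ = 0, a e_j = √j · e_{j−1} for j ≥ 1, and a† e_j = √(j+1) · e_{j+1}. Then for all n, m, j ∈ ℕ, the sum Σ_{k=0}^{∞} ((−1)^k / (k! · √(n!·m!))) · (a†)^{n+k} a^{m+k} e_j has only finitely many nonzero terms (all terms with m + k > j vanish) and equals e_n if j = m, and 0 if j ≠ m. -/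
open scoped BigOperators

/-- The annihilation operator `a` on the space of finitely supported sequences
`ℕ →₀ ℂ` (with standard basis `e_j = Finsupp.single j 1`):
`a e₀ = 0` and `a e_j = √j • e_{j-1}` for `j ≥ 1`. -/
noncomputable def aOp : (ℕ →₀ ℂ) →ₗ[ℂ] (ℕ →₀ ℂ) :=
  Finsupp.lsum ℂ fun j => ((Real.sqrt j : ℂ)) • Finsupp.lsingle (j - 1)

/-- The creation operator `a†` on `ℕ →₀ ℂ`: `a† e_j = √(j+1) • e_{j+1}`. -/
noncomputable def aDagOp : (ℕ →₀ ℂ) →ₗ[ℂ] (ℕ →₀ ℂ) :=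
  Finsupp.lsum ℂ fun j => ((Real.sqrt (j + 1) : ℂ)) • Finsupp.lsingle (j + 1)


lemma aOp_single (j : ℕ) :
    aOp (Finsupp.single j (1:ℂ)) = ((Real.sqrt j : ℝ) : ℂ) • Finsupp.single (j-1) (1:ℂ) := by
  simp [aOp, Finsupp.smul_single]

lemma aDag_single (j : ℕ) :
    aDagOp (Finsupp.single j (1:ℂ)) = ((Real.sqrt (j+1) : ℝ) : ℂ) • Finsupp.single (j+1) (1:ℂ) := by
  simp [aDagOp, Finsupp.smul_single]

lemma sqrt_nat_mul (a b : ℕ) :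
    ((Real.sqrt a : ℝ) : ℂ) * ((Real.sqrt b : ℝ) : ℂ) = ((Real.sqrt (a*b) : ℝ) : ℂ) := by
  push_cast [Real.sqrt_mul (Nat.cast_nonneg a)]
  ring

lemma aOp_pow_single (p j : ℕ) :
    (aOp ^ p) (Finsupp.single j (1:ℂ)) =
      ((Real.sqrt (j.descFactorial p) : ℝ) : ℂ) • Finsupp.single (j - p) (1:ℂ) := by
  induction p generalizing j with
  | zero => simp
  | succ p ih =>
    rw [pow_succ, Module.End.mul_apply, aOp_single, map_smul, ih, smul_smul, sqrt_nat_mul]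
    rcases j with _ | i
    · simp
    · have h1 : i + 1 - 1 - p = i + 1 - (p+1) := by omega
      rw [Nat.succ_descFactorial_succ, h1]
      push_cast [Nat.add_sub_cancel]
      ring_nf

lemma aDag_pow_single (q i : ℕ) :
    (aDagOp ^ q) (Finsupp.single i (1:ℂ)) =
      ((Real.sqrt ((i+q).descFactorial q) : ℝ) : ℂ) • Finsupp.single (i + q) (1:ℂ) := by
  induction q generalizing i with
  | zero => simp
  | succ q ih =>
    rw [pow_succ, Module.End.mul_apply, aDag_single, map_smul, ih, smul_smul]
    have hc : ((i:ℝ) + 1) = (((i+1 : ℕ)) : ℝ) := by push_cast; ring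
    rw [hc, sqrt_nat_mul]
    have h1 : i + 1 + q = i + (q + 1) := by omega
    rw [h1]
    have h2 : i + (q + 1) - q = i + 1 := by omega
    rw [Nat.descFactorial_succ, h2]
    push_cast
    ring_nf

lemma term_eq (n m j k : ℕ) :
    ((aDagOp ^ (n + k) * aOp ^ (m + k)) (Finsupp.single j (1 : ℂ))) =
      (((Real.sqrt (j.descFactorial (m+k)) : ℝ) : ℂ) *
        ((Real.sqrt ((j-(m+k)+(n+k)).descFactorial (n+k)) : ℝ) : ℂ)) •
        Finsupp.single (j-(m+k)+(n+k)) (1:ℂ) := by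
  rw [Module.End.mul_apply, aOp_pow_single, map_smul, aDag_pow_single, smul_smul]

lemma sqrt_div_key {a b c T1 T2 : ℕ} (h1 : c.factorial * a = T1) (h2 : c.factorial * b = T2) :
    Real.sqrt a * Real.sqrt b = Real.sqrt ((T1:ℝ)*(T2:ℝ)) / (c.factorial : ℝ) := by
  have hT : ((T1:ℝ)*(T2:ℝ)) = ((c.factorial:ℝ))^2 * ((a:ℝ)*(b:ℝ)) := by
    push_cast [← h1, ← h2]; ring
  rw [hT, Real.sqrt_mul (by positivity), Real.sqrt_sq (by positivity),
    Real.sqrt_mul (Nat.cast_nonneg a)]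
  have : (c.factorial : ℝ) ≠ 0 := by positivity
  field_simp

lemma alt_sum (d : ℕ) :
    (∑ k ∈ Finset.range (d+1), ((-1:ℂ))^k / ((k.factorial : ℂ) * ((d-k).factorial : ℂ))) =
      (if d = 0 then (1:ℂ) else 0) / (d.factorial : ℂ) := by
  have h : ∀ k ∈ Finset.range (d+1),
      ((-1:ℂ))^k / ((k.factorial : ℂ) * ((d-k).factorial : ℂ)) =
        ((-1:ℂ))^k * (d.choose k : ℂ) / (d.factorial : ℂ) := by
    intro k hk
    rw [Nat.cast_choose ℂ (by simpa [Nat.lt_succ_iff] using hk)]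
    have h1 : (k.factorial : ℂ) ≠ 0 := Nat.cast_ne_zero.2 k.factorial_ne_zero
    have h1' : ((d-k).factorial : ℂ) ≠ 0 := Nat.cast_ne_zero.2 (d-k).factorial_ne_zero
    have h2 : (d.factorial : ℂ) ≠ 0 := Nat.cast_ne_zero.2 d.factorial_ne_zero
    field_simp
  rw [Finset.sum_congr rfl h, ← Finset.sum_div]
  congr 1
  have := Int.alternating_sum_range_choose (n := d)
  calc (∑ k ∈ Finset.range (d+1), ((-1:ℂ))^k * (d.choose k : ℂ))
      = ((∑ k ∈ Finset.range (d+1), ((-1:ℤ))^k * (d.choose k : ℤ) : ℤ) : ℂ) := by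
        push_cast
        exact Finset.sum_congr rfl fun k _ => by ring
    _ = _ := by rw [this]; split <;> simp

/-- Normal-ordered Fock space identity
`|n⟩⟨m| = Σ_k ((-1)^k/(k! √(n! m!))) (a†)^{n+k} a^{m+k}`: applied to the basis vector
`e_j`, all terms with `m + k > j` vanish (so the sum is finite) and the sum equals
`e_n` if `j = m` and `0` otherwise. -/
theorem fock_normal_ordered_identity (n m j : ℕ) :
    (∀ k : ℕ, j < m + k →
      ((-1 : ℂ) ^ k /
          ((k.factorial : ℂ) * (Real.sqrt ((n.factorial : ℝ) * (m.factorial : ℝ)) : ℂ))) •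
        ((aDagOp ^ (n + k) * aOp ^ (m + k)) (Finsupp.single j (1 : ℂ))) = 0) ∧
    (∑ᶠ k : ℕ,
      ((-1 : ℂ) ^ k /
          ((k.factorial : ℂ) * (Real.sqrt ((n.factorial : ℝ) * (m.factorial : ℝ)) : ℂ))) •
        ((aDagOp ^ (n + k) * aOp ^ (m + k)) (Finsupp.single j (1 : ℂ)))) =
      (if j = m then Finsupp.single n (1 : ℂ) else 0) := by
  have part1 : ∀ k : ℕ, j < m + k →
      ((-1 : ℂ) ^ k /
          ((k.factorial : ℂ) * (Real.sqrt ((n.factorial : ℝ) * (m.factorial : ℝ)) : ℂ))) •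
        ((aDagOp ^ (n + k) * aOp ^ (m + k)) (Finsupp.single j (1 : ℂ))) = 0 := by
    intro k hk
    rw [term_eq, Nat.descFactorial_eq_zero_iff_lt.2 hk]
    simp
  refine ⟨part1, ?_⟩
  have hsupp : (Function.support fun k : ℕ =>
      ((-1 : ℂ) ^ k /
          ((k.factorial : ℂ) * (Real.sqrt ((n.factorial : ℝ) * (m.factorial : ℝ)) : ℂ))) •
        ((aDagOp ^ (n + k) * aOp ^ (m + k)) (Finsupp.single j (1 : ℂ)))) ⊆
      ↑(Finset.range (j+1)) := by
    intro k hk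
    simp only [Finset.coe_range, Set.mem_Iio]
    by_contra h
    push_neg at h
    exact hk (part1 k (by omega))
  rw [finsum_eq_sum_of_support_subset _ hsupp]
  by_cases hmj : m ≤ j
  · obtain ⟨d, rfl⟩ : ∃ d, j = m + d := ⟨j - m, by omega⟩
    rw [← Finset.sum_subset (Finset.range_subset_range.2 (show d+1 ≤ m+d+1 by omega))
        (fun k _ hk => part1 k (by simp only [Finset.mem_range] at hk; omega))]
    have hN : ((Real.sqrt ((n.factorial : ℝ) * (m.factorial : ℝ)) : ℝ) : ℂ) ≠ 0 := by
      rw [Complex.ofReal_ne_zero]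
      positivity
    have hterm : ∀ k ∈ Finset.range (d+1),
        ((-1 : ℂ) ^ k /
            ((k.factorial : ℂ) * (Real.sqrt ((n.factorial : ℝ) * (m.factorial : ℝ)) : ℂ))) •
          ((aDagOp ^ (n + k) * aOp ^ (m + k)) (Finsupp.single (m+d) (1 : ℂ))) =
        (((-1 : ℂ) ^ k / ((k.factorial : ℂ) * (((d-k).factorial : ℝ) : ℂ))) *
          ((Real.sqrt ((((m+d).factorial : ℝ)) * (((n+d).factorial : ℝ))) /
            Real.sqrt ((n.factorial : ℝ) * (m.factorial : ℝ)) : ℝ) : ℂ)) •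
          Finsupp.single (n+d) (1:ℂ) := by
      intro k hk
      have hk' : k ≤ d := by simpa [Nat.lt_succ_iff] using hk
      rw [term_eq]
      have hidx : m+d-(m+k)+(n+k) = n+d := by omega
      rw [hidx, smul_smul]
      congr 1
      have h1 : (d-k).factorial * ((m+d).descFactorial (m+k)) = (m+d).factorial := by
        have := Nat.factorial_mul_descFactorial (show m+k ≤ m+d by omega)
        have he : m+d-(m+k) = d-k := by omega
        rwa [he] at this
      have h2 : (d-k).factorial * ((n+d).descFactorial (n+k)) = (n+d).factorial := by
        have := Nat.factorial_mul_descFactorial (show n+k ≤ n+d by omega)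
        have he : n+d-(n+k) = d-k := by omega
        rwa [he] at this
      have hkey := sqrt_div_key h1 h2
      have hkeyC : (((Real.sqrt ((m+d).descFactorial (m+k)) : ℝ)) : ℂ) *
          ((Real.sqrt ((n+d).descFactorial (n+k)) : ℝ) : ℂ) =
          ((Real.sqrt ((((m+d).factorial : ℝ)) * (((n+d).factorial : ℝ))) : ℝ) : ℂ) /
            (((d-k).factorial : ℝ) : ℂ) := by
      -- cast hkey
        rw [← Complex.ofReal_mul, hkey, Complex.ofReal_div]
      rw [hkeyC]
      have hk1 : (k.factorial : ℂ) ≠ 0 := Nat.cast_ne_zero.2 k.factorial_ne_zero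
      have hk2 : (((d-k).factorial : ℝ) : ℂ) ≠ 0 := by
        rw [Complex.ofReal_ne_zero]
        positivity
      rw [Complex.ofReal_div]
      field_simp
    rw [Finset.sum_congr rfl hterm, ← Finset.sum_smul, ← Finset.sum_mul]
    have halt : (∑ k ∈ Finset.range (d+1),
        ((-1:ℂ))^k / ((k.factorial : ℂ) * (((d-k).factorial : ℝ) : ℂ))) =
        (if d = 0 then (1:ℂ) else 0) / (d.factorial : ℂ) := by
      rw [← alt_sum d]
      refine Finset.sum_congr rfl fun k _ => ?_
      norm_num
    rw [halt]
    rcases Nat.eq_zero_or_pos d with hd | hd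
    · subst hd
      rw [if_pos rfl, if_pos (by omega)]
      have hs : Real.sqrt ((((m+0).factorial : ℝ)) * (((n+0).factorial : ℝ))) =
          Real.sqrt ((n.factorial : ℝ) * (m.factorial : ℝ)) := by
        rw [mul_comm]
        norm_num
      rw [hs]
      have : (Real.sqrt ((n.factorial : ℝ) * (m.factorial : ℝ)) /
          Real.sqrt ((n.factorial : ℝ) * (m.factorial : ℝ)) : ℝ) = 1 := by
        apply div_self
        positivity
      rw [this]
      norm_num
    · rw [if_neg (by omega), if_neg (by omega)]
      simp
  · rw [if_neg (by omega)]
    exact Finset.sum_eq_zero fun k _ => part1 k (by omega)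
end
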